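/- Let Λ = ⊕_{g∈G} Λ_g be a strongly G-graded ring with G a finite group whose order |G| is invertible in Λ. If the identity component Δ = Λ_1 is hereditary, then Λ is hereditary. -/

import Mathlib

open Pointwise
/-- A strong grading of the ring `Λ` by the group `G`: `Λ` is the internal direct
sum of the additive subgroups `A g`, and `A g * A h = A (g * h)` for all `g, h`. -/
structure IsStrongGrading {G Λ : Type*} [Group G] [Ring Λ] [DecidableEq G]
    (A : G → AddSubgroup Λ) : Prop where
  internal : DirectSum.IsInternal A
  one_mem : (1 : Λ) ∈ A 1
  mul_mem : ∀ (g h : G), ∀ a ∈ A g, ∀ b ∈ A h, a * b ∈ A (g * h)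
  strong : ∀ g h : G, A (g * h) ≤ AddSubgroup.closure ((A g : Set Λ) * (A h : Set Λ))

/-- `Λ_g ≅ Λ_h` as `Δ`-bimodules (`Δ = Λ_1`): an additive equivalence compatible
with left and right multiplication by elements of the identity component. -/
def ComponentBimodIso {G Λ : Type*} [Group G] [Ring Λ]
    (A : G → AddSubgroup Λ) (g h : G) : Prop :=
  ∃ f : A g ≃+ A h,
    (∀ d ∈ A (1 : G), ∀ x y : A g, (y : Λ) = d * (x : Λ) → ((f y : Λ) = d * (f x : Λ))) ∧
    (∀ d ∈ A (1 : G), ∀ x y : A g, (y : Λ) = (x : Λ) * d → ((f y : Λ) = (f x : Λ) * d))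

/-- A ring is *left hereditary* iff every left ideal is projective. -/
def IsLeftHereditary (R : Type*) [Ring R] : Prop :=
  ∀ I : Submodule R R, Module.Projective R I

/-!
Strong grading gives, for every `g`, elements `u_{g,i} ∈ Λ_g` and `v_{g,i} ∈ Λ_{g⁻¹}` with
`∑ᵢ u_{g,i} v_{g,i} = 1`. The coordinates `x ↦ x_g u_{g⁻¹,i} ∈ Δ` embed `Λ` into a finite free
`Δ`-module, so over the hereditary ring `Δ` every left ideal of `Λ` is `Δ`-projective.
Conversely, if a `Δ`-linear map `s` splits a `Λ`-linear surjection onto `M`, then the average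
`m ↦ |G|⁻¹ ∑_{g,i} u_{g,i} s(v_{g,i} m)` is a `Λ`-linear splitting (this is the separability of
`Λ` over `Δ`), so `Δ`-projective `Λ`-modules are `Λ`-projective.
-/

open DirectSum

theorem Module.Projective.of_exact {R M N P : Type*} [Semiring R] [AddCommGroup M]
    [AddCommGroup N] [AddCommGroup P] [Module R M] [Module R N] [Module R P]
    [Module.Projective R M] [Module.Projective R P] {f : M →ₗ[R] N} {g : N →ₗ[R] P}
    (h : Function.Exact f g) (hf : Function.Injective f) (hg : Function.Surjective g) :
    Module.Projective R N := by
  obtain ⟨l, hl⟩ := Module.projective_lifting_property g LinearMap.id hg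
  exact .of_equiv' (h.splitSurjectiveEquiv hf ⟨l, hl⟩).1.symm

theorem IsLeftHereditary.projective_of_injective {R M : Type*} [Ring R] [AddCommGroup M]
    [Module R M] (hR : IsLeftHereditary R) {n : ℕ} (f : M →ₗ[R] Fin n → R)
    (hf : Function.Injective f) : Module.Projective R M := by
  induction n generalizing M with
  | zero =>
    have : Subsingleton M := hf.subsingleton
    infer_instance
  | succ n ih =>
    let π := (LinearMap.proj (Fin.last n) ∘ₗ f).rangeRestrict
    let K := LinearMap.ker π
    have : Module.Projective R K := by
      refine ih (LinearMap.funLeft R R Fin.castSucc ∘ₗ f ∘ₗ K.subtype) fun x y hxy ↦ ?_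
      refine Subtype.ext (hf (funext fun i ↦ ?_))
      induction i using Fin.lastCases with
      | last => exact congrArg Subtype.val (x.2.trans y.2.symm)
      | cast i => exact congrFun hxy i
    have : Module.Projective R (LinearMap.range (LinearMap.proj (Fin.last n) ∘ₗ f)) := hR _
    exact .of_exact (LinearMap.exact_subtype_ker_map π) K.subtype_injective
      (LinearMap.surjective_rangeRestrict _)

namespace IsStrongGrading

variable {G Λ : Type*} [Group G] [Ring Λ] [DecidableEq G] {A : G → AddSubgroup Λ}

theorem exists_sum_mul_eq_one (hA : IsStrongGrading A) (g : G) :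
    ∃ (n : ℕ) (u v : Fin n → Λ), (∀ i, u i ∈ A g) ∧ (∀ i, v i ∈ A g⁻¹) ∧
      ∑ i, u i * v i = 1 := by
  have h1 : (1 : Λ) ∈ Submodule.span ℤ ((A g : Set Λ) * (A g⁻¹ : Set Λ)) := by
    rw [← Submodule.mem_toAddSubgroup, Submodule.span_int_eq_addSubgroupClosure]
    exact hA.strong g g⁻¹ (by simpa using hA.one_mem)
  obtain ⟨n, c, x, hx⟩ := Submodule.mem_span_set'.mp h1
  choose u hu v hv huv using fun i ↦ Set.mem_mul.mp (x i).2
  refine ⟨n, fun i ↦ c i • u i, v, fun i ↦ zsmul_mem (hu i) _, hv, ?_⟩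
  simpa only [smul_mul_assoc, huv] using hx

theorem decompose_mul_of_mem_one (hA : IsStrongGrading A) [Decomposition A] {d : Λ}
    (hd : d ∈ A 1) (x : Λ) (g : G) : (decompose A (d * x) g : Λ) = d * decompose A x g := by
  induction x using Decomposition.inductionOn A with
  | zero => simp
  | @homogeneous h x =>
    have hdx : d * x ∈ A h := by simpa using hA.mul_mem 1 h d hd x x.2
    obtain rfl | hne := eq_or_ne h g
    · rw [decompose_of_mem_same A hdx, decompose_of_mem_same A x.2]
    · rw [decompose_of_mem_ne A hdx hne, decompose_of_mem_ne A x.2 hne, mul_zero]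
  | add x y hx hy => simp [mul_add, decompose_add, hx, hy]

theorem exists_injective_linearMap_fin_pi (hA : IsStrongGrading A) [Fintype G]
    [Decomposition A] (D : Subring Λ) (hD : (D : Set Λ) = A 1) :
    ∃ (N : ℕ) (f : Λ →ₗ[D] Fin N → D), Function.Injective f := by
  choose n u v hu hv huv using hA.exists_sum_mul_eq_one
  have hmem (x : Λ) (p : Σ g, Fin (n g⁻¹)) : (decompose A x p.1 : Λ) * u p.1⁻¹ p.2 ∈ D := by
    rw [← SetLike.mem_coe, hD, SetLike.mem_coe, ← mul_inv_cancel p.1]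
    exact hA.mul_mem _ _ _ (decompose A x p.1).2 _ (hu _ _)
  let f : Λ →ₗ[D] (Σ g, Fin (n g⁻¹)) → D :=
    { toFun x p := ⟨_, hmem x p⟩
      map_add' x y := by ext; simp [add_mul]
      map_smul' d x := by
        ext
        have hd : (d : Λ) ∈ A 1 := by rw [← SetLike.mem_coe, ← hD]; exact d.2
        simp [Subring.smul_def, hA.decompose_mul_of_mem_one hd, mul_assoc] }
  have hf : Function.Injective f := by
    intro x y hxy
    refine (decompose A).injective (DFinsupp.ext fun g ↦ Subtype.ext ?_)
    have hrec (z : Λ) : (decompose A z g : Λ) = ∑ i, (decompose A z g * u g⁻¹ i) * v g⁻¹ i := by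
      simp only [mul_assoc, ← Finset.mul_sum, huv, mul_one]
    rw [hrec x, hrec y]
    exact Finset.sum_congr rfl fun i _ ↦
      congrArg (· * v g⁻¹ i) (congrArg Subtype.val (congrFun hxy ⟨g, i⟩))
  exact ⟨_, (LinearEquiv.funCongrLeft D D (Fintype.equivFin _)).symm.toLinearMap ∘ₗ f,
    by simpa using hf⟩

section Averaging

variable {D : Subring Λ} {M F : Type*} [AddCommGroup M] [Module Λ M] [AddCommGroup F]
  [Module Λ F] (s : M →ₗ[D] F) {n : G → ℕ} {u v : ∀ g, Fin (n g) → Λ}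

theorem sum_smul_map_smul_mul_of_mem (hA : IsStrongGrading A) (hD : (D : Set Λ) = A 1)
    (hu : ∀ g i, u g i ∈ A g) (hv : ∀ g i, v g i ∈ A g⁻¹) (huv : ∀ g, ∑ i, u g i * v g i = 1)
    {h : G} {l : Λ} (hl : l ∈ A h) (g : G) (m : M) :
    ∑ i, u g i • s ((v g i * l) • m) = l • ∑ j, u (h⁻¹ * g) j • s (v (h⁻¹ * g) j • m) := by
  set k := h⁻¹ * g
  have hs (i : Fin (n g)) (j : Fin (n k)) (x : M) :
      s ((v g i * l * u k j) • x) = (v g i * l * u k j) • s x := by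
    have hd : v g i * l * u k j ∈ A (g⁻¹ * h * k) :=
      hA.mul_mem _ _ _ (hA.mul_mem _ _ _ (hv g i) _ hl) _ (hu k j)
    rw [show g⁻¹ * h * (h⁻¹ * g) = 1 by group] at hd
    exact s.map_smul ⟨_, by rwa [← SetLike.mem_coe, hD]⟩ x
  -- insert `1 = ∑ⱼ u_{k,j} v_{k,j}`: the coefficients `v_{g,i} l u_{k,j}` lie in `Δ`
  calc ∑ i, u g i • s ((v g i * l) • m)
      = ∑ i, u g i • s (∑ j, (v g i * l * u k j) • v k j • m) := by
        simp only [smul_smul, mul_assoc, ← Finset.sum_smul, ← Finset.mul_sum, huv, mul_one]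
    _ = ∑ i, ∑ j, (u g i * (v g i * l * u k j)) • s (v k j • m) := by
        simp only [map_sum, hs, Finset.smul_sum]
        simp only [smul_smul]
    _ = ∑ j, ((∑ i, u g i * v g i) * (l * u k j)) • s (v k j • m) := by
        rw [Finset.sum_comm]
        simp only [Finset.sum_mul, Finset.sum_smul, mul_assoc]
    _ = l • ∑ j, u k j • s (v k j • m) := by
        simp only [huv, one_mul, Finset.smul_sum, smul_smul]

theorem sum_sum_smul_map_smul_mul [Fintype G] [Decomposition A] (hA : IsStrongGrading A)
    (hD : (D : Set Λ) = A 1) (hu : ∀ g i, u g i ∈ A g) (hv : ∀ g i, v g i ∈ A g⁻¹)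
    (huv : ∀ g, ∑ i, u g i * v g i = 1) (l : Λ) (m : M) :
    ∑ g, ∑ i, u g i • s ((v g i * l) • m) = l • ∑ g, ∑ i, u g i • s (v g i • m) := by
  induction l using Decomposition.inductionOn A with
  | zero => simp
  | @homogeneous h l =>
    simp only [hA.sum_smul_map_smul_mul_of_mem s hD hu hv huv l.2, ← Finset.smul_sum]
    exact congrArg (fun x : F ↦ (l : Λ) • x)
      (Fintype.sum_equiv (Equiv.mulLeft h⁻¹) _ _ fun _ ↦ rfl)
  | add l l' hl hl' =>
    simp only [mul_add, add_smul, map_add, smul_add, Finset.sum_add_distrib, hl, hl']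

end Averaging

theorem projective_of_projective_subring (hA : IsStrongGrading A) [Fintype G] [Decomposition A]
    (hcard : IsUnit (Fintype.card G : Λ)) (D : Subring Λ) (hD : (D : Set Λ) = A 1)
    (M : Type*) [AddCommGroup M] [Module Λ M] [Module.Projective D M] :
    Module.Projective Λ M := by
  choose n u v hu hv huv using hA.exists_sum_mul_eq_one
  let p := Finsupp.linearCombination Λ (id : M → M)
  obtain ⟨s, hs⟩ := Module.projective_lifting_property (p.restrictScalars D) LinearMap.id
    (Finsupp.linearCombination_id_surjective Λ M)
  let T : M →ₗ[Λ] M →₀ Λ :=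
    { toFun m := ∑ g, ∑ i, u g i • s (v g i • m)
      map_add' := by simp [smul_add, Finset.sum_add_distrib]
      map_smul' l m := by
        simpa [mul_smul] using hA.sum_sum_smul_map_smul_mul s hD hu hv huv l m }
  have hpT (m : M) : p (T m) = (Fintype.card G : Λ) • m := by
    have hps (x : M) : p (s x) = x := LinearMap.congr_fun hs x
    simp [T, map_sum, hps, smul_smul, ← Finset.sum_smul, huv, Nat.cast_smul_eq_nsmul]
  obtain ⟨c, hc⟩ := hcard
  have hcomm (l : Λ) : Commute (↑c⁻¹ : Λ) l := (hc ▸ Nat.cast_commute _ l).units_inv_left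
  refine Module.projective_def'.2 ⟨
    { toFun m := (↑c⁻¹ : Λ) • T m
      map_add' := by simp
      map_smul' l m := by simp [smul_smul, (hcomm l).eq] }, ?_⟩
  ext m
  change p ((↑c⁻¹ : Λ) • T m) = m
  rw [map_smul, hpT, smul_smul, ← hc, Units.inv_mul, one_smul]

end IsStrongGrading

/-- Let `Λ` be strongly graded by a finite group `G` whose order
is invertible in `Λ`. If the identity component `Δ = Λ_1` is hereditary, then so
is `Λ`. -/
theorem hereditary_of_coprime_order {G Λ : Type*} [Group G] [Fintype G] [Ring Λ]
    [DecidableEq G]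
    (A : G → AddSubgroup Λ) (hA : IsStrongGrading A)
    (hcard : IsUnit ((Fintype.card G : ℕ) : Λ))
    (D : Subring Λ) (hD : (D : Set Λ) = (A (1 : G) : Set Λ))
    (hher : IsLeftHereditary D) :
    IsLeftHereditary Λ := by
  let _ := hA.internal.chooseDecomposition
  intro I
  obtain ⟨N, f, hf⟩ := hA.exists_injective_linearMap_fin_pi D hD
  have : Module.Projective D I :=
    hher.projective_of_injective (f ∘ₗ I.subtype.restrictScalars D) (hf.comp I.injective_subtype)
  exact hA.projective_of_projective_subring hcard D hD I
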